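/- (Correctness of the POVM test) Let (a_i)_{i=1,…,r_A} and (b_j)_{j=1,…,r_B} be families of nonzero vectors in ℝ³ satisfying ∑_i ‖a_i‖ = 2, ∑_i a_i = 0, ∑_j ‖b_j‖ = 2, ∑_j b_j = 0. Suppose indices i and j are chosen independently with probabilities p(i) = ‖a_i‖/2 and p(j) = ‖b_j‖/2, and then outcomes A, B ∈ {-1, 1} are drawn with the singlet joint distribution p(A, B) = (1 - AB â_i·b̂_j)/4 for the normalized directions â_i = a_i/‖a_i‖, b̂_j = b_j/‖b_j‖. Then the probability that A = B = 1 equals 1/4, and conditioned on A = B = 1, the joint distribution of (i, j) equals the quantum POVM distribution: P(i, j | A = B = 1) = (‖a_i‖‖b_j‖ - a_i·b_j)/4. -/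

import Mathlib

open scoped RealInnerProductSpace

/-!
The index weights `‖a_i‖/2 · ‖b_j‖/2` cancel the normalisations
of `â_i`, `b̂_j`, so the protocol produces `A = B = 1` jointly with `(i, j)` with probability
`(‖a_i‖‖b_j‖ - a_i·b_j)/16`. Summing over `(i, j)` factors the expression into
`(∑ ‖a_i‖)(∑ ‖b_j‖) - (∑ a_i)·(∑ b_j) = 2·2 - 0`, giving `1/4`, and conditioning multiplies
by `4`.
-/

/-- The joint probability, in the POVM simulation protocol, that Alice picks POVM
index `i` (probability `‖a i‖/2`), Bob picks index `j` (probability `‖b j‖/2`), and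
the singlet projective-measurement protocol on the normalized directions
`â_i = a_i/‖a_i‖`, `b̂_j = b_j/‖b_j‖` produces outcomes `α, β ∈ {-1, 1}`
(probability `(1 - αβ â_i·b̂_j)/4`). -/
noncomputable def povmProtocolProb {rA rB : ℕ}
    (a : Fin rA → EuclideanSpace ℝ (Fin 3)) (b : Fin rB → EuclideanSpace ℝ (Fin 3))
    (i : Fin rA) (j : Fin rB) (α β : ℝ) : ℝ :=
  (‖a i‖ / 2) * (‖b j‖ / 2) *
    ((1 - α * β * ⟪(‖a i‖)⁻¹ • a i, (‖b j‖)⁻¹ • b j⟫) / 4)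

theorem povmProtocolProb_eq {rA rB : ℕ}
    (a : Fin rA → EuclideanSpace ℝ (Fin 3)) (b : Fin rB → EuclideanSpace ℝ (Fin 3))
    {i : Fin rA} {j : Fin rB} (hai : a i ≠ 0) (hbj : b j ≠ 0) (α β : ℝ) :
    povmProtocolProb a b i j α β = (‖a i‖ * ‖b j‖ - α * β * ⟪a i, b j⟫) / 16 := by
  have hna : ‖a i‖ ≠ 0 := norm_ne_zero_iff.mpr hai
  have hnb : ‖b j‖ ≠ 0 := norm_ne_zero_iff.mpr hbj
  rw [povmProtocolProb, real_inner_smul_left, real_inner_smul_right]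
  field_simp
  ring

theorem sum_sum_norm_mul_norm_sub_inner {E ι κ : Type*}
    [NormedAddCommGroup E] [InnerProductSpace ℝ E] [Fintype ι] [Fintype κ]
    (a : ι → E) (b : κ → E) :
    ∑ i, ∑ j, (‖a i‖ * ‖b j‖ - ⟪a i, b j⟫) =
      (∑ i, ‖a i‖) * (∑ j, ‖b j‖) - ⟪∑ i, a i, ∑ j, b j⟫ := by
  simp only [Finset.sum_sub_distrib, Finset.sum_mul_sum, sum_inner, inner_sum]
  rw [Finset.sum_comm (f := fun j i => ⟪a i, b j⟫)]

/-- **Correctness of the POVM test.** For rank-one POVMs given by nonzero Bloch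
vectors `(a_i)`, `(b_j)` with `∑ᵢ ‖a_i‖ = 2`, `∑ᵢ a_i = 0`, `∑ⱼ ‖b_j‖ = 2`,
`∑ⱼ b_j = 0`: the probability that both projective outcomes equal `+1` is `1/4`,
and conditioned on `A = B = 1`, the pair `(i, j)` has exactly the quantum POVM
joint distribution `(‖a_i‖‖b_j‖ - a_i·b_j)/4`. -/
theorem povm_test_correct {rA rB : ℕ}
    (a : Fin rA → EuclideanSpace ℝ (Fin 3)) (b : Fin rB → EuclideanSpace ℝ (Fin 3))
    (ha0 : ∀ i, a i ≠ 0) (hb0 : ∀ j, b j ≠ 0)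
    (haSum : (∑ i, ‖a i‖) = 2) (haVec : (∑ i, a i) = 0)
    (hbSum : (∑ j, ‖b j‖) = 2) (hbVec : (∑ j, b j) = 0) :
    (∑ i, ∑ j, povmProtocolProb a b i j 1 1) = 1 / 4 ∧
    ∀ i j, povmProtocolProb a b i j 1 1 / (∑ i', ∑ j', povmProtocolProb a b i' j' 1 1)
      = (‖a i‖ * ‖b j‖ - ⟪a i, b j⟫) / 4 := by
  have hprob : ∀ i j, povmProtocolProb a b i j 1 1 = (‖a i‖ * ‖b j‖ - ⟪a i, b j⟫) / 16 := by
    intro i j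
    simpa using povmProtocolProb_eq a b (ha0 i) (hb0 j) 1 1
  have htotal : (∑ i, ∑ j, povmProtocolProb a b i j 1 1) = 1 / 4 := by
    simp only [hprob, ← Finset.sum_div, sum_sum_norm_mul_norm_sub_inner, haSum, hbSum, haVec,
      hbVec, inner_zero_left]
    norm_num
  refine ⟨htotal, fun i j => ?_⟩
  rw [htotal, hprob]
  ring
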